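/- arXiv:2205.00762 — 2 statements merged into one kernel-verified Lean document; each statement's English description precedes it below -/
import Mathlib

section
/- Suppose no two clauses of the CNF formula F resolve (no pair of clauses of F produces a non-tautological resolvent). Then a clause c ∈ F is superredundant in F if and only if F contains a clause that is a strict subset of c. -/
/-- A literal is a propositional variable (indexed by ℕ) with a sign. -/
abbrev Lit : Type := ℕ × Bool

/-- The complementary literal. -/
def negLit (l : Lit) : Lit := (l.1, !l.2)

/-- A clause is a finite set of literals. -/
abbrev Clause : Type := Finset Lit

/-- A clause is non-tautological: it contains no literal together with its complement. -/
def NonTauto (c : Clause) : Prop := ∀ l ∈ c, negLit l ∉ c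

/-- A CNF formula is a finite set of non-tautological clauses. -/
def IsCNF (F : Finset Clause) : Prop := ∀ c ∈ F, NonTauto c

/-- `Resolvent C D E`: the clauses `C = c₁ ∪ {x}` and `D = c₂ ∪ {¬x}` resolve on the
variable `x` into `E = c₁ ∪ c₂`, all three clauses being non-tautological. -/
def Resolvent (C D E : Clause) : Prop :=
  ∃ (x : ℕ) (c₁ c₂ : Clause),
    (x, true) ∉ c₁ ∧ (x, false) ∉ c₂ ∧
    NonTauto (insert (x, true) c₁) ∧ NonTauto (insert (x, false) c₂) ∧
    NonTauto (c₁ ∪ c₂) ∧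
    C = insert (x, true) c₁ ∧ D = insert (x, false) c₂ ∧ E = c₁ ∪ c₂

/-- The resolution closure of a formula: the smallest set of clauses containing `F`
and closed under resolution. -/
inductive ResCn (F : Finset Clause) : Clause → Prop
  | base {c : Clause} : c ∈ F → ResCn F c
  | step {C D E : Clause} : ResCn F C → ResCn F D → Resolvent C D E → ResCn F E

/-- A valuation satisfies a clause if it makes some literal of it true. -/
def satClause (v : ℕ → Bool) (c : Clause) : Prop := ∃ l ∈ c, v l.1 = l.2

/-- A valuation satisfies a set of clauses if it satisfies every clause in it. -/
def satSet (v : ℕ → Bool) (G : Set Clause) : Prop := ∀ c ∈ G, satClause v c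

/-- A set of clauses entails a clause: every valuation satisfying the set satisfies
the clause. -/
def entailsC (G : Set Clause) (c : Clause) : Prop :=
  ∀ v : ℕ → Bool, satSet v G → satClause v c

/-- A formula entails a formula. -/
def entailsF (F G : Finset Clause) : Prop :=
  ∀ v : ℕ → Bool, satSet v (↑F : Set Clause) → satSet v (↑G : Set Clause)

/-- Two formulae are equivalent if they are satisfied by the same valuations. -/
def equivF (F G : Finset Clause) : Prop :=
  ∀ v : ℕ → Bool, satSet v (↑F : Set Clause) ↔ satSet v (↑G : Set Clause)

/-- A clause `c` of `F` is superredundant in `F` if `ResCn(F) \ {c} ⊨ c`. -/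
def SuperRedundant (F : Finset Clause) (c : Clause) : Prop :=
  entailsC ({d | ResCn F d} \ {c}) c

/-- The size of a formula: the total number of literal occurrences in it. -/
def size (F : Finset Clause) : ℕ := ∑ c ∈ F, c.card

/-- The set of variables occurring (positively or negatively) in a formula. -/
def varsF (F : Finset Clause) : Set ℕ := {n | ∃ c ∈ F, ∃ b : Bool, (n, b) ∈ c}



lemma negLit_negLit (l : Lit) : negLit (negLit l) = l := by
  simp [negLit]

lemma nonTauto_subset {c d : Clause} (h : c ⊆ d) (hd : NonTauto d) : NonTauto c :=
  fun l hl hnl => hd l (h hl) (h hnl)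

def Good (G : Finset Clause) : Prop :=
  ∀ d ∈ G, ∀ e ∈ G, ∀ l ∈ d, negLit l ∈ e → ∃ l' ∈ d, l' ≠ l ∧ negLit l' ∈ e

lemma good_subset {G G' : Finset Clause} (h : G' ⊆ G) (hG : Good G) : Good G' :=
  fun d hd e he l hl hnl => hG d (h hd) e (h he) l hl hnl

lemma good_sdiff {G : Finset Clause} (R : Finset Lit) (hG : Good G)
    (hR : ∀ d ∈ G, ∀ l ∈ d, negLit l ∉ R) :
    Good (G.image (· \ R)) := by
  intro d' hd' e' he' l hl hnl
  simp only [Finset.mem_image] at hd' he'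
  obtain ⟨d, hd, rfl⟩ := hd'
  obtain ⟨e, he, rfl⟩ := he'
  rw [Finset.mem_sdiff] at hl hnl
  obtain ⟨l', hl'd, hne, hnl'e⟩ := hG d hd e he l hl.1 hnl.1
  refine ⟨l', Finset.mem_sdiff.2 ⟨hl'd, ?_⟩, hne, Finset.mem_sdiff.2 ⟨hnl'e, ?_⟩⟩
  · intro hmem
    have h2 := hR e he (negLit l') hnl'e
    rw [negLit_negLit] at h2
    exact h2 hmem
  · exact hR d hd l' hl'd

def fvars (G : Finset Clause) : Finset ℕ := G.sup (fun d => d.image Prod.fst)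

lemma mem_fvars {G : Finset Clause} {y : ℕ} :
    y ∈ fvars G ↔ ∃ d ∈ G, ∃ b : Bool, (y, b) ∈ d := by
  simp only [fvars, Finset.mem_sup, Finset.mem_image]
  constructor
  · rintro ⟨d, hd, l, hl, rfl⟩
    exact ⟨d, hd, l.2, hl⟩
  · rintro ⟨d, hd, b, hb⟩
    exact ⟨d, hd, (y, b), hb, rfl⟩


lemma empty_of_fvars_empty {G : Finset Clause} (h : fvars G = ∅)
    (hne : ∀ d ∈ G, d ≠ ∅) : G = ∅ := by
  by_contra hG
  obtain ⟨d, hd⟩ := Finset.nonempty_iff_ne_empty.2 hG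
  obtain ⟨l, hl⟩ := Finset.nonempty_iff_ne_empty.2 (hne d hd)
  have : l.1 ∈ fvars G := mem_fvars.2 ⟨d, hd, l.2, hl⟩
  simp [h] at this

lemma sat_of_good : ∀ (n : ℕ) (G : Finset Clause), (fvars G).card ≤ n →
    (∀ d ∈ G, NonTauto d) → (∀ d ∈ G, d ≠ ∅) → Good G →
    ∃ v : ℕ → Bool, ∀ d ∈ G, satClause v d := by
  intro n
  induction n with
  | zero =>
    intro G hcard hnt hne hG
    have : G = ∅ := empty_of_fvars_empty (Finset.card_eq_zero.1 (Nat.le_zero.1 hcard)) hne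
    exact ⟨fun _ => true, by simp [this]⟩
  | succ n ih =>
    intro G hcard hnt hne hG
    by_cases hfe : fvars G = ∅
    · exact ⟨fun _ => true, by simp [empty_of_fvars_empty hfe hne]⟩
    obtain ⟨x, hx⟩ := Finset.nonempty_iff_ne_empty.2 hfe
    have hbex : ∃ b : Bool, ∀ d ∈ G, (x, b) ∉ d → d \ {((x, !b) : Lit)} ≠ ∅ := by
      by_cases hu : ({((x, false) : Lit)} : Clause) ∈ G
      · refine ⟨false, fun d hd hxd => ?_⟩
        have hxt : (x, true) ∉ d := by
          intro hxt
          obtain ⟨l', hl', hne', _⟩ := hG {((x, false) : Lit)} hu d hd (x, false)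
            (Finset.mem_singleton_self _) (by simpa [negLit] using hxt)
          exact hne' (Finset.mem_singleton.1 hl')
        rw [show ((!false : Bool)) = true by rfl,
          Finset.sdiff_eq_self_of_disjoint (by simpa [Finset.disjoint_singleton_right] using hxt)]
        exact hne d hd
      · refine ⟨true, fun d hd hxd hemp => ?_⟩
        have hsub : d ⊆ {((x, !true) : Lit)} := by
          intro l hl
          by_contra hl2
          exact (Finset.eq_empty_iff_forall_notMem.1 hemp l)
            (Finset.mem_sdiff.2 ⟨hl, by simpa using hl2⟩)
        rcases Finset.subset_singleton_iff.1 hsub with h | h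
        · exact hne d hd h
        · rw [h] at hd; exact hu (by simpa using hd)
    obtain ⟨b, hb⟩ := hbex
    set G' : Finset Clause :=
      (G.filter (fun d => (x, b) ∉ d)).image (· \ ({((x, !b) : Lit)} : Finset Lit)) with hG'def
    have hGmem : ∀ d' ∈ G', ∃ d ∈ G, (x, b) ∉ d ∧ d' = d \ {((x, !b) : Lit)} := by
      intro d' hd'
      simp only [hG'def, Finset.mem_image, Finset.mem_filter] at hd'
      obtain ⟨d, ⟨hd, hxd⟩, rfl⟩ := hd'
      exact ⟨d, hd, hxd, rfl⟩
    have hvars' : fvars G' ⊆ (fvars G).erase x := by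
      intro y hy
      obtain ⟨d', hd', bb, hbb⟩ := mem_fvars.1 hy
      obtain ⟨d, hd, hxd, rfl⟩ := hGmem d' hd'
      rw [Finset.mem_sdiff, Finset.mem_singleton] at hbb
      refine Finset.mem_erase.2 ⟨?_, mem_fvars.2 ⟨d, hd, bb, hbb.1⟩⟩
      rintro rfl
      have hbbb : bb = b := by
        rcases Bool.eq_false_or_eq_true b with h | h <;>
          rcases Bool.eq_false_or_eq_true bb with h2 | h2 <;> simp_all
      rw [hbbb] at hbb
      exact hxd hbb.1
    have hcard' : (fvars G').card ≤ n := by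
      have h1 := Finset.card_le_card hvars'
      rw [Finset.card_erase_of_mem hx] at h1
      omega
    obtain ⟨w, hw⟩ := ih G' hcard'
      (fun d' hd' => by
        obtain ⟨d, hd, _, rfl⟩ := hGmem d' hd'
        exact nonTauto_subset (Finset.sdiff_subset) (hnt d hd))
      (fun d' hd' => by
        obtain ⟨d, hd, hxd, rfl⟩ := hGmem d' hd'
        exact hb d hd hxd)
      (by
        apply good_sdiff
        · exact good_subset (Finset.filter_subset _ _) hG
        · intro d hd l hl hmem
          rw [Finset.mem_singleton] at hmem
          have hl1 : l.1 = x := congrArg Prod.fst hmem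
          have hl2 : l.2 = b := by
            have h2 : (!l.2) = !b := congrArg Prod.snd hmem
            exact Bool.not_inj h2
          rw [Finset.mem_filter] at hd
          apply hd.2
          rw [← hl1, ← hl2]
          exact hl)
    refine ⟨Function.update w x b, fun d hd => ?_⟩
    by_cases hxd : (x, b) ∈ d
    · exact ⟨(x, b), hxd, by simp⟩
    · have hd' : d \ {((x, !b) : Lit)} ∈ G' := by
        simp only [hG'def, Finset.mem_image]
        exact ⟨d, Finset.mem_filter.2 ⟨hd, hxd⟩, rfl⟩
      obtain ⟨l, hl, hwl⟩ := hw _ hd'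
      rw [Finset.mem_sdiff, Finset.mem_singleton] at hl
      obtain ⟨y, bb⟩ := l
      have hne1 : y ≠ x := by
        rintro rfl
        by_cases h2 : bb = b
        · rw [h2] at hl; exact hxd hl.1
        · have : bb = !b := by
            rcases Bool.eq_false_or_eq_true b with h | h <;>
              rcases Bool.eq_false_or_eq_true bb with h3 | h3 <;> simp_all
          rw [this] at hl
          exact hl.2 rfl
      exact ⟨(y, bb), hl.1, by rw [Function.update_of_ne hne1] at *; exact hwl⟩

lemma conflict_pair {d e : Clause} (hd : NonTauto d) (he : NonTauto e)
    (hres : ∀ E, ¬ Resolvent d e E) {y : ℕ}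
    (h1 : (y, true) ∈ d) (h2 : (y, false) ∈ e) :
    ∃ m, (m ∈ d ∧ negLit m ∈ e) ∧ m ≠ (y, true) ∧ negLit m ≠ (y, false) := by
  set c₁ := d.erase (y, true) with hc₁
  set c₂ := e.erase (y, false) with hc₂
  have hd' : d = insert (y, true) c₁ := (Finset.insert_erase h1).symm
  have he' : e = insert (y, false) c₂ := (Finset.insert_erase h2).symm
  have hnont : ¬ NonTauto (c₁ ∪ c₂) := by
    intro hnt
    exact hres (c₁ ∪ c₂) ⟨y, c₁, c₂, Finset.notMem_erase _ _, Finset.notMem_erase _ _,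
      hd' ▸ hd, he' ▸ he, hnt, hd', he', rfl⟩
  simp only [NonTauto, not_forall] at hnont
  obtain ⟨m, hm, hnm⟩ := hnont
  rw [not_not] at hnm
  rw [Finset.mem_union] at hm hnm
  have hnt₁ : NonTauto c₁ := nonTauto_subset (Finset.erase_subset _ _) hd
  have hnt₂ : NonTauto c₂ := nonTauto_subset (Finset.erase_subset _ _) he
  rcases hm with hm | hm <;> rcases hnm with hnm | hnm
  · exact absurd hnm (hnt₁ m hm)
  · exact ⟨m, ⟨Finset.mem_of_mem_erase hm, Finset.mem_of_mem_erase hnm⟩,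
      Finset.ne_of_mem_erase hm, Finset.ne_of_mem_erase hnm⟩
  · refine ⟨negLit m, ⟨Finset.mem_of_mem_erase hnm, by
      rw [negLit_negLit]; exact Finset.mem_of_mem_erase hm⟩,
      Finset.ne_of_mem_erase hnm, by rw [negLit_negLit]; exact Finset.ne_of_mem_erase hm⟩
  · exact absurd hnm (hnt₂ m hm)

lemma good_of_nores {F : Finset Clause} (hF : ∀ c ∈ F, NonTauto c)
    (hnores : ∀ C ∈ F, ∀ D ∈ F, ∀ E : Clause, ¬ Resolvent C D E) : Good F := by
  intro d hd e he l hl hnl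
  obtain ⟨y, bb⟩ := l
  cases bb
  · have hnl' : (y, true) ∈ e := by simpa [negLit] using hnl
    obtain ⟨m, ⟨hme, hmd⟩, hnem, hnem2⟩ :=
      conflict_pair (hF e he) (hF d hd) (fun E => hnores e he d hd E) hnl' hl
    refine ⟨negLit m, hmd, hnem2, by rw [negLit_negLit]; exact hme⟩
  · have hnl' : (y, false) ∈ e := by simpa [negLit] using hnl
    obtain ⟨m, ⟨hmd, hme⟩, hnem, _⟩ :=
      conflict_pair (hF d hd) (hF e he) (fun E => hnores d hd e he E) hl hnl'
    exact ⟨m, hmd, hnem, hme⟩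

lemma resCn_mem {F : Finset Clause}
    (hnores : ∀ C ∈ F, ∀ D ∈ F, ∀ E : Clause, ¬ Resolvent C D E)
    {d : Clause} (h : ResCn F d) : d ∈ F := by
  induction h with
  | base h => exact h
  | step _ _ hE ihC ihD => exact absurd hE (hnores _ ihC _ ihD _)

/-- if no two clauses of `F` resolve, a clause of `F` is superredundant iff
`F` contains a strict subset of it. -/
theorem superredundant_iff_strict_subset_of_no_resolution
    (F : Finset Clause) (hF : IsCNF F)
    (hnores : ∀ C ∈ F, ∀ D ∈ F, ∀ E : Clause, ¬ Resolvent C D E)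
    (c : Clause) (hc : c ∈ F) :
    SuperRedundant F c ↔ ∃ c' ∈ F, c' ⊂ c := by
  have hF' : ∀ c ∈ F, NonTauto c := hF
  constructor
  · intro hsr
    by_contra hno
    push_neg at hno
    set G₀ : Finset Clause := (F.erase c).filter (fun d => ∀ l ∈ d, negLit l ∉ c) with hG₀def
    set G' : Finset Clause := G₀.image (· \ c) with hG'def
    have hG₀mem : ∀ d ∈ G₀, d ∈ F ∧ d ≠ c ∧ ∀ l ∈ d, negLit l ∉ c := by
      intro d hd
      rw [hG₀def, Finset.mem_filter, Finset.mem_erase] at hd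
      exact ⟨hd.1.2, hd.1.1, hd.2⟩
    have hgood : Good G' := by
      apply good_sdiff
      · exact good_subset (fun d hd => (hG₀mem d hd).1) (good_of_nores hF' hnores)
      · exact fun d hd => (hG₀mem d hd).2.2
    have hnt' : ∀ d ∈ G', NonTauto d := by
      intro d' hd'
      rw [hG'def, Finset.mem_image] at hd'
      obtain ⟨d, hd, rfl⟩ := hd'
      exact nonTauto_subset Finset.sdiff_subset (hF' d (hG₀mem d hd).1)
    have hne' : ∀ d ∈ G', d ≠ ∅ := by
      intro d' hd' hemp
      rw [hG'def, Finset.mem_image] at hd'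
      obtain ⟨d, hd, rfl⟩ := hd'
      obtain ⟨hdF, hdc, _⟩ := hG₀mem d hd
      have hsub : d ⊆ c := by
        intro l hl
        by_contra hl2
        exact (Finset.eq_empty_iff_forall_notMem.1 hemp l) (Finset.mem_sdiff.2 ⟨hl, hl2⟩)
      exact hno d hdF (Finset.ssubset_iff_subset_ne.2 ⟨hsub, hdc⟩)
    obtain ⟨w, hw⟩ := sat_of_good (fvars G').card G' le_rfl hnt' hne' hgood
    set v : ℕ → Bool := fun y =>
      if (y, true) ∈ c then false else if (y, false) ∈ c then true else w y with hvdef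
    have hvfalse : ∀ l ∈ c, v l.1 ≠ l.2 := by
      rintro ⟨y, bb⟩ hl
      cases bb
      · have h1 : (y, true) ∉ c := by
          intro h; exact hF' c hc (y, true) h (by simpa [negLit] using hl)
        simp [hvdef, h1, hl]
      · simp [hvdef, hl]
    have hvsat : ∀ d ∈ F, d ≠ c → satClause v d := by
      intro d hd hdc
      by_cases hauto : ∃ l ∈ d, negLit l ∈ c
      · obtain ⟨⟨y, bb⟩, hld, hlc⟩ := hauto
        cases bb
        · have h1 : (y, true) ∈ c := by simpa [negLit] using hlc
          refine ⟨(y, false), hld, ?_⟩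
          simp [hvdef, h1]
        · have h1 : (y, false) ∈ c := by simpa [negLit] using hlc
          have h2 : (y, true) ∉ c := by
            intro h; exact hF' c hc (y, false) h1 (by simpa [negLit] using h)
          refine ⟨(y, true), hld, ?_⟩
          simp [hvdef, h1, h2]
      · push_neg at hauto
        have hdG₀ : d ∈ G₀ := by
          rw [hG₀def, Finset.mem_filter, Finset.mem_erase]
          exact ⟨⟨hdc, hd⟩, hauto⟩
        have hdG' : d \ c ∈ G' := by
          rw [hG'def, Finset.mem_image]
          exact ⟨d, hdG₀, rfl⟩
        obtain ⟨⟨y, bb⟩, hl, hwl⟩ := hw _ hdG'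
        rw [Finset.mem_sdiff] at hl
        have h1 : (y, true) ∉ c := by
          intro h
          cases bb
          · exact hauto (y, false) hl.1 (by simpa [negLit] using h)
          · exact hl.2 h
        have h2 : (y, false) ∉ c := by
          intro h
          cases bb
          · exact hl.2 h
          · exact hauto (y, true) hl.1 (by simpa [negLit] using h)
        refine ⟨(y, bb), hl.1, ?_⟩
        simpa [hvdef, h1, h2] using hwl
    obtain ⟨l, hl, hvl⟩ := hsr v (by
      rintro d ⟨hd1, hd2⟩
      exact hvsat d (resCn_mem hnores hd1) hd2)
    exact hvfalse l hl hvl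
  · rintro ⟨c', hc', hss⟩ v hv
    have hsat : satClause v c' := hv c' ⟨ResCn.base hc', hss.ne⟩
    obtain ⟨l, hl, hvl⟩ := hsat
    exact ⟨l, hss.subset hl, hvl⟩
end

section
/- Let l be a literal that occurs in no clause of the CNF formula F, and suppose F ∪ {{l}} is satisfiable. Then the single-literal clause {l} is superirredundant in F ∪ {{l}}. -/
lemma resCn_sound {F : Finset Clause} {c : Clause} (h : ResCn F c)
    (v : ℕ → Bool) (hv : satSet v (↑F : Set Clause)) : satClause v c := by
  induction h with
  | base hc => exact hv _ hc
  | step hC hD hres ihC ihD =>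
    obtain ⟨x, c₁, c₂, _, _, _, _, _, hC', hD', hE⟩ := hres
    subst hC' hD' hE
    by_cases hx : v x = true
    · obtain ⟨m, hm, hvm⟩ := ihD
      rcases Finset.mem_insert.mp hm with h | h
      · subst h; simp at hvm; rw [hx] at hvm; exact absurd hvm (by simp)
      · exact ⟨m, Finset.mem_union_right _ h, hvm⟩
    · obtain ⟨m, hm, hvm⟩ := ihC
      rcases Finset.mem_insert.mp hm with h | h
      · subst h; simp at hvm; exact absurd hvm hx
      · exact ⟨m, Finset.mem_union_left _ h, hvm⟩

lemma resCn_contains_l {F : Finset Clause} {l : Lit}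
    (hnotin : ∀ c ∈ F, l ∉ c) {c : Clause}
    (h : ResCn (insert ({l} : Clause) F) c) (hl : l ∈ c) : c = ({l} : Clause) := by
  induction h with
  | base hc =>
    rcases Finset.mem_insert.mp hc with h | h
    · exact h
    · exact absurd hl (hnotin _ h)
  | step hC hD hres ihC ihD =>
    obtain ⟨x, c₁, c₂, hx1, hx2, _, _, _, hC', hD', hE⟩ := hres
    subst hC' hD' hE
    rcases Finset.mem_union.mp hl with h | h
    · have hC1 : insert ((x, true) : Lit) c₁ = ({l} : Clause) :=
        ihC (Finset.mem_insert_of_mem h)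
      have hxl : ((x, true) : Lit) = l := by
        have := Finset.mem_insert_self ((x, true) : Lit) c₁
        rw [hC1] at this; simpa using this
      have : l ∈ insert ((x, true) : Lit) c₁ ∨ True := Or.inr trivial
      have hc1sub : c₁ ⊆ ({l} : Clause) := hC1 ▸ Finset.subset_insert _ _
      have := Finset.mem_singleton.mp (hc1sub h)
      rw [this, ← hxl] at h
      exact absurd h hx1
    · have hD1 : insert ((x, false) : Lit) c₂ = ({l} : Clause) :=
        ihD (Finset.mem_insert_of_mem h)
      have hxl : ((x, false) : Lit) = l := by
        have := Finset.mem_insert_self ((x, false) : Lit) c₂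
        rw [hD1] at this; simpa using this
      have hc2sub : c₂ ⊆ ({l} : Clause) := hD1 ▸ Finset.subset_insert _ _
      have := Finset.mem_singleton.mp (hc2sub h)
      rw [this, ← hxl] at h
      exact absurd h hx2

/-- if the literal `l` occurs in no clause of `F` and `F ∪ {{l}}` is
satisfiable, then `{l}` is superirredundant in `F ∪ {{l}}`. -/
theorem superirredundant_new_literal
    (F : Finset Clause) (hF : IsCNF F) (l : Lit)
    (hnotin : ∀ c ∈ F, l ∉ c)
    (hsat : ∃ v : ℕ → Bool, satSet v (↑(insert ({l} : Clause) F) : Set Clause)) :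
    ¬ SuperRedundant (insert ({l} : Clause) F) {l} := by
  intro hred
  obtain ⟨v, hv⟩ := hsat
  set v' : ℕ → Bool := fun n => if n = l.1 then !l.2 else v n with hv'
  have hsat' : satSet v' ({d | ResCn (insert ({l} : Clause) F) d} \ {({l} : Clause)}) := by
    rintro d ⟨hd, hne⟩
    have hdne : d ≠ ({l} : Clause) := hne
    have hld : l ∉ d := fun hl => hdne (resCn_contains_l hnotin hd hl)
    obtain ⟨m, hm, hvm⟩ := resCn_sound hd v hv
    refine ⟨m, hm, ?_⟩
    by_cases hm1 : m.1 = l.1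
    · have hm2 : m.2 ≠ l.2 := by
        intro h
        have : m = l := Prod.ext hm1 h
        exact hld (this ▸ hm)
      have : m.2 = !l.2 := by
        cases hb : m.2 <;> cases hb2 : l.2 <;> simp_all
      simp [hv', hm1, this]
    · simp [hv', hm1, hvm]
  obtain ⟨m, hm, hvm⟩ := hred v' hsat'
  have : m = l := Finset.mem_singleton.mp hm
  subst this
  simp [hv'] at hvm
end
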